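/- Let α_i → −∞, let (k_i) and (n_i) be sequences of positive integers satisfying n_{i+1}/z_i ≤ δ where z_i = k_1 + ⋯ + k_i, let M ∈ ℝ and V ≥ 0, and let (S_n) be a real sequence such that for z_i ≤ n ≤ z_i + n_{i+1}: S_n ≤ (α_i + ε)·z_i + M·(n − z_i) + V, and for z_i + n_{i+1} ≤ n ≤ z_{i+1}: S_n ≤ (α_i + δ)·z_i + (n − z_i)(α_{i+1} + δ) + V. Then lim_{n→∞} S_n/n = −∞. -/

import Mathlib

/-
Cut ℕ into the blocks `[z i, z (i + 1))`. Near the start of a block, `m ≤ (1 + δ) z i`, so the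
first bound gives `S m / m ≤ (α i + ε) / (1 + δ) + |M| δ + V`; further in, the second bound
is a convex combination of `α i + δ` and `α (i + 1) + δ` plus `V`. Both block bounds tend to
`-∞` with `i`, and every large `m` lies in a block of large index.
-/

open Filter Set

lemma StrictMono.exists_Ico_of_le {z : ℕ → ℕ} (hz : StrictMono z) {I m : ℕ} (hm : z I ≤ m) :
    ∃ i, I ≤ i ∧ z i ≤ m ∧ m < z (i + 1) := by
  have hunb : ¬BddAbove (z '' Ici I) := by
    rintro ⟨b, hb⟩
    have hle : z (b + 1 + I) ≤ b := hb (mem_image_of_mem z (by simp))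
    have hge : b + 1 + I ≤ z (b + 1 + I) := hz.le_apply
    omega
  have hm' : m ∈ ⋃ i ∈ Ici I, Ico (z i) (z (Order.succ i)) := by
    rw [biUnion_Ici_Ico_map_succ (fun i hi => hz.monotone hi) hunb]
    exact hm
  obtain ⟨i, hzm, hi, hmz⟩ := by simpa [Order.succ_eq_add_one] using hm'
  exact ⟨i, hi, hzm, hmz⟩

lemma tendsto_atBot_of_forall_Ico_le {β : Type*} [Preorder β] {f b : ℕ → β} {z : ℕ → ℕ}
    (hz : StrictMono z) (hb : Tendsto b atTop atBot)
    (hfb : ∀ᶠ i in atTop, ∀ m, z i ≤ m → m < z (i + 1) → f m ≤ b i) :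
    Tendsto f atTop atBot := by
  rw [tendsto_atBot]
  intro B
  obtain ⟨I, hI⟩ := ((hb.eventually_le_atBot B).and hfb).exists_forall_of_atTop
  filter_upwards [eventually_ge_atTop (z I)] with m hm
  obtain ⟨i, hIi, hzm, hmz⟩ := hz.exists_Ico_of_le hm
  exact ((hI i hIi).2 m hzm hmz).trans (hI i hIi).1

lemma strictMono_sum_range_succ {k : ℕ → ℕ} (hk : ∀ i, 0 < k i) :
    StrictMono fun i => ∑ l ∈ Finset.range (i + 1), k l :=
  strictMono_nat_of_lt_succ fun i => by
    rw [Finset.sum_range_succ _ (i + 1)]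
    exact Nat.lt_add_of_pos_right (hk (i + 1))

lemma div_le_of_le_mul_add_mul_sub {a M V δ z m n s : ℝ} (hδ : 0 ≤ δ) (hV : 0 ≤ V) (ha : a ≤ 0)
    (hz : 0 < z) (hn : n / z ≤ δ) (hzm : z ≤ m) (hmn : m ≤ z + n) (hm : 1 ≤ m)
    (hs : s ≤ a * z + M * (m - z) + V) :
    s / m ≤ a / (1 + δ) + |M| * δ + V := by
  have hmz : m - z ≤ δ * z := by linarith [(div_le_iff₀ hz).1 hn]
  have h1 : a * z ≤ a / (1 + δ) * m := by
    rw [div_mul_eq_mul_div, le_div_iff₀ (by linarith)]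
    nlinarith
  have h2 : M * (m - z) ≤ |M| * δ * m :=
    calc M * (m - z) ≤ |M| * (m - z) := mul_le_mul_of_nonneg_right (le_abs_self M) (by linarith)
      _ ≤ |M| * (δ * m) := mul_le_mul_of_nonneg_left (by nlinarith) (abs_nonneg M)
      _ = |M| * δ * m := by ring
  rw [div_le_iff₀ (by linarith)]
  nlinarith

lemma div_le_of_le_mul_add_mul_add {a b z m s V : ℝ} (hV : 0 ≤ V) (hz : 0 ≤ z) (hzm : z ≤ m)
    (hm : 1 ≤ m) (hs : s ≤ a * z + (m - z) * b + V) : s / m ≤ max a b + V := by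
  have hconv : a * z + (m - z) * b ≤ max a b * m := by
    nlinarith [le_max_left a b, le_max_right a b]
  rw [div_le_iff₀ (by linarith)]
  nlinarith

theorem stmt_17_general (α : ℕ → ℝ) (k n : ℕ → ℕ) (δ ε M V : ℝ)
    (hδ : 0 < δ) (hV : 0 ≤ V)
    (hk : ∀ i, 0 < k i)
    (z : ℕ → ℕ) (hz : ∀ i, z i = ∑ l ∈ Finset.range (i + 1), k l)
    (hratio : ∀ i, (n (i + 1) : ℝ) / (z i : ℝ) ≤ δ)
    (hα : Filter.Tendsto α Filter.atTop Filter.atBot)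
    (S : ℕ → ℝ)
    (hS1 : ∀ i m, z i ≤ m → m ≤ z i + n (i + 1) →
      S m ≤ (α i + ε) * (z i : ℝ) + M * ((m : ℝ) - (z i : ℝ)) + V)
    (hS2 : ∀ i m, z i + n (i + 1) ≤ m → m ≤ z (i + 1) →
      S m ≤ (α i + δ) * (z i : ℝ) + ((m : ℝ) - (z i : ℝ)) * (α (i + 1) + δ) + V) :
    Filter.Tendsto (fun m => S m / (m : ℝ)) Filter.atTop Filter.atBot := by
  have hz_mono : StrictMono z := funext hz ▸ strictMono_sum_range_succ hk
  have hz_pos (i : ℕ) : 0 < z i := by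
    rw [hz]
    exact Finset.sum_pos (fun l _ => hk l) Finset.nonempty_range_add_one
  refine tendsto_atBot_of_forall_Ico_le hz_mono
    (b := fun i => max ((α i + ε) / (1 + δ) + |M| * δ) (max (α i + δ) (α (i + 1) + δ)) + V)
    (tendsto_atBot_add_const_right _ V <| tendsto_sup_atBot _
      (tendsto_atBot_add_const_right _ _ <|
        (tendsto_atBot_add_const_right _ ε hα).atBot_div_const (by linarith))
      (tendsto_sup_atBot _ (tendsto_atBot_add_const_right _ δ hα)
        (tendsto_atBot_add_const_right _ δ (hα.comp (tendsto_add_atTop_nat 1))))) ?_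
  filter_upwards [hα.eventually_le_atBot (-ε)] with i hαi m hzm hmz
  have hm : (1 : ℝ) ≤ m := by exact_mod_cast (hz_pos i).trans_le hzm
  have hzm' : (z i : ℝ) ≤ m := by exact_mod_cast hzm
  rcases le_total m (z i + n (i + 1)) with hnear | hfar
  · refine (div_le_of_le_mul_add_mul_sub hδ.le hV (by linarith) (by exact_mod_cast hz_pos i)
      (hratio i) hzm' (by exact_mod_cast hnear) hm (hS1 i m hzm hnear)).trans ?_
    exact add_le_add_left (le_max_left _ _) V
  · refine (div_le_of_le_mul_add_mul_add hV (Nat.cast_nonneg _) hzm' hm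
      (hS2 i m hfar hmz.le)).trans ?_
    exact add_le_add_left (le_max_right _ _) V

theorem stmt_17 (α : ℕ → ℝ) (k n : ℕ → ℕ) (δ ε M V : ℝ)
    (hδ : 0 < δ) (hε : 0 < ε) (hV : 0 ≤ V)
    (hk : ∀ i, 0 < k i) (hn : ∀ i, 0 < n i)
    (z : ℕ → ℕ) (hz : ∀ i, z i = ∑ l ∈ Finset.range (i + 1), k l)
    (hratio : ∀ i, (n (i + 1) : ℝ) / (z i : ℝ) ≤ δ)
    (hα : Filter.Tendsto α Filter.atTop Filter.atBot)
    (S : ℕ → ℝ)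
    (hS1 : ∀ i m, z i ≤ m → m ≤ z i + n (i + 1) →
      S m ≤ (α i + ε) * (z i : ℝ) + M * ((m : ℝ) - (z i : ℝ)) + V)
    (hS2 : ∀ i m, z i + n (i + 1) ≤ m → m ≤ z (i + 1) →
      S m ≤ (α i + δ) * (z i : ℝ) + ((m : ℝ) - (z i : ℝ)) * (α (i + 1) + δ) + V) :
    Filter.Tendsto (fun m => S m / (m : ℝ)) Filter.atTop Filter.atBot :=
  stmt_17_general α k n δ ε M V hδ hV hk z hz hratio hα S hS1 hS2
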